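/- arXiv:math/0002242 — 7 statements merged into one kernel-verified Lean document; each statement's English description precedes it below -/
import Mathlib

section
/- Let T be an uncountable index set, (B_t)_{t∈T} a family of Banach spaces, and r : (Π_{t∈T} B_t) → (Π_{t∈T} B_t) a continuous linear map. For every countable subset A ⊆ T there exist a countable subset S ⊆ T with A ⊆ S and a continuous linear map r_S : (Π_{t∈S} B_t) → (Π_{t∈S} B_t) such that π_S ∘ r = r_S ∘ π_S, where π_S denotes the canonical projection onto the subproduct indexed by S. -/
open Filter Topology

/-- Each coordinate of a continuous linear endomorphism of a product of normed spaces
depends only on finitely many coordinates. -/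
lemma coord_depends_on_finite {T : Type*} {B : T → Type*}
    [∀ t, NormedAddCommGroup (B t)] [∀ t, NormedSpace ℝ (B t)]
    (r : (∀ t, B t) →L[ℝ] (∀ t, B t)) (t : T) :
    ∃ I : Set T, I.Finite ∧ ∀ x : ∀ t, B t, (∀ i ∈ I, x i = 0) → r x t = 0 := by
  have hc : Continuous fun x : ∀ t, B t => r x t :=
    (continuous_apply t).comp r.continuous
  have h1 : (fun x : ∀ t, B t => r x t) ⁻¹' Metric.ball 0 1 ∈ 𝓝 (0 : ∀ t, B t) := by
    have : r (0 : ∀ t, B t) t ∈ Metric.ball (0 : B t) 1 := by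
      simp
    exact hc.continuousAt.preimage_mem_nhds (Metric.isOpen_ball.mem_nhds this)
  rw [nhds_pi] at h1
  obtain ⟨I, hIfin, V, hV, hsub⟩ := Filter.mem_pi.mp h1
  refine ⟨I, hIfin, fun x hx => ?_⟩
  by_contra hne
  have hpos : 0 < ‖r x t‖ := norm_pos_iff.mpr hne
  set c : ℝ := 2 / ‖r x t‖ with hc'
  have hmem : c • x ∈ I.pi V := by
    intro i hi
    have : (c • x) i = 0 := by simp [hx i hi]
    rw [this]
    exact mem_of_mem_nhds (hV i)
  have h2 : r (c • x) t ∈ Metric.ball (0 : B t) 1 := hsub hmem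
  have h3 : ‖r (c • x) t‖ < 1 := by simpa [Metric.mem_ball, dist_zero_right] using h2
  have h4 : r (c • x) t = c • r x t := by rw [map_smul]; rfl
  rw [h4, norm_smul] at h3
  have hcabs : ‖c‖ = 2 / ‖r x t‖ := by
    rw [hc', Real.norm_eq_abs, abs_of_pos (by positivity)]
  rw [hcabs, div_mul_cancel₀ _ (ne_of_gt hpos)] at h3
  linarith

theorem endomorphism_of_uncountable_product_respects_countable_subproduct
    {T : Type*} [Uncountable T] (B : T → Type*)
    [∀ t, NormedAddCommGroup (B t)] [∀ t, NormedSpace ℝ (B t)] [∀ t, CompleteSpace (B t)]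
    (r : (∀ t, B t) →L[ℝ] (∀ t, B t)) (A : Set T) (hA : A.Countable) :
    ∃ S : Set T, S.Countable ∧ A ⊆ S ∧
      ∃ rS : (∀ t : S, B (t : T)) →L[ℝ] (∀ t : S, B (t : T)),
        ∀ x : ∀ t, B t, (fun s : S => r x s) = rS (fun s : S => x s) := by
  classical
  -- the finite dependency sets
  choose F hFfin hF using fun t => coord_depends_on_finite r t
  -- iterate closure under F
  let g : ℕ → Set T := fun n => Nat.rec A (fun _ s => s ∪ ⋃ t ∈ s, F t) n
  have hg0 : g 0 = A := rfl
  have hgsucc : ∀ n, g (n + 1) = g n ∪ ⋃ t ∈ g n, F t := fun n => rfl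
  have hgc : ∀ n, (g n).Countable := by
    intro n
    induction n with
    | zero => exact hA
    | succ n ih =>
      rw [hgsucc]
      exact ih.union (ih.biUnion fun t _ => (hFfin t).countable)
  have hgmono : ∀ n, g n ⊆ g (n + 1) := fun n => by
    rw [hgsucc]; exact Set.subset_union_left
  set S : Set T := ⋃ n, g n with hS
  have hSc : S.Countable := Set.countable_iUnion hgc
  have hAS : A ⊆ S := hg0 ▸ Set.subset_iUnion g 0
  have hclosed : ∀ t ∈ S, F t ⊆ S := by
    intro t ht
    obtain ⟨n, hn⟩ := Set.mem_iUnion.mp ht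
    intro i hi
    refine Set.mem_iUnion.mpr ⟨n + 1, ?_⟩
    rw [hgsucc]
    exact Or.inr (Set.mem_biUnion hn hi)
  -- extension-by-zero map
  let E : (∀ s : S, B (s : T)) →L[ℝ] (∀ t, B t) :=
    { toFun := fun y t => if h : t ∈ S then y ⟨t, h⟩ else 0
      map_add' := fun y z => by
        funext t
        by_cases h : t ∈ S <;> simp [h]
      map_smul' := fun c y => by
        funext t
        by_cases h : t ∈ S <;> simp [h]
      cont := by
        apply continuous_pi
        intro t
        by_cases h : t ∈ S
        · simp only [dif_pos h]
          exact continuous_apply _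
        · simp only [dif_neg h]
          exact continuous_const }
  -- projection
  let π : (∀ t, B t) →L[ℝ] (∀ s : S, B (s : T)) :=
    ContinuousLinearMap.pi fun s : S => ContinuousLinearMap.proj (s : T)
  refine ⟨S, hSc, hAS, (π.comp r).comp E, fun x => ?_⟩
  funext s
  have hz : ∀ i ∈ S, (x - E (fun s : S => x s)) i = 0 := by
    intro i hi
    simp only [Pi.sub_apply]
    have : E (fun s : S => x s) i = x i := by
      show (if h : i ∈ S then x i else 0) = x i
      rw [dif_pos hi]
    rw [this, sub_self]
  have hzero : r (x - E (fun s : S => x s)) s = 0 :=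
    hF s _ fun i hi => hz i (hclosed s s.2 hi)
  have := map_sub r x (E (fun s : S => x s))
  have h5 : r x s - r (E (fun s : S => x s)) s = 0 := by
    rw [← Pi.sub_apply, ← this]; exact hzero
  have h6 : r x s = r (E (fun s : S => x s)) s := sub_eq_zero.mp h5
  exact h6
end

section
/- Let T be an index set, (B_t)_{t∈T} Banach spaces, S ⊆ T countable, and f : (Π_{t∈T} B_t) → (Π_{t∈S} B_t) a continuous linear map. Then there exists a countable subset R ⊆ T with S ⊆ R and a continuous linear map g : (Π_{t∈R} B_t) → (Π_{t∈S} B_t) such that f = g ∘ π_R. -/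
/-- A continuous linear map from a product of normed spaces into a normed space
vanishes on vectors supported away from some finite set of coordinates. -/
lemma clm_factors_finite {T : Type*} (B : T → Type*)
    [∀ t, NormedAddCommGroup (B t)] [∀ t, NormedSpace ℝ (B t)]
    {E : Type*} [NormedAddCommGroup E] [NormedSpace ℝ E]
    (φ : (∀ t, B t) →L[ℝ] E) :
    ∃ F : Set T, F.Finite ∧ ∀ x : ∀ t, B t, (∀ t ∈ F, x t = 0) → φ x = 0 := by
  have h : φ ⁻¹' Metric.ball 0 1 ∈ nhds (0 : ∀ t, B t) := by
    have := φ.continuous.continuousAt (x := 0)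
    have h0 : φ 0 = 0 := map_zero φ
    have := this (Metric.ball_mem_nhds (φ 0) one_pos)
    simpa [h0] using this
  rw [nhds_pi, Filter.mem_pi] at h
  obtain ⟨I, hIfin, u, hu, hsub⟩ := h
  refine ⟨I, hIfin, fun x hx => ?_⟩
  have key : ∀ c : ℝ, ‖φ (c • x)‖ < 1 := by
    intro c
    have hmem : c • x ∈ I.pi u := by
      intro t ht
      have hx0 : x t = 0 := hx t ht
      have : (c • x) t = 0 := by simp [hx0]
      rw [this]
      exact mem_of_mem_nhds (hu t)
    have := hsub hmem
    simpa [Metric.mem_ball, dist_eq_norm] using this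
  by_contra hne
  have hpos : 0 < ‖φ x‖ := by
    rcases (norm_nonneg (φ x)).lt_or_eq with h | h
    · exact h
    · exact absurd (norm_eq_zero.mp h.symm) hne
  have := key (2 / ‖φ x‖)
  rw [map_smul, norm_smul] at this
  have h2 : ‖(2 : ℝ) / ‖φ x‖‖ = 2 / ‖φ x‖ := by
    rw [Real.norm_eq_abs, abs_of_pos (by positivity)]
  rw [h2, div_mul_cancel₀ _ hpos.ne'] at this
  linarith

theorem map_into_countable_subproduct_factors_through_countable_subproduct
    {T : Type*} (B : T → Type*)
    [∀ t, NormedAddCommGroup (B t)] [∀ t, NormedSpace ℝ (B t)] [∀ t, CompleteSpace (B t)]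
    (S : Set T) (hS : S.Countable)
    (f : (∀ t, B t) →L[ℝ] (∀ t : S, B (t : T))) :
    ∃ R : Set T, R.Countable ∧ S ⊆ R ∧
      ∃ g : (∀ t : R, B (t : T)) →L[ℝ] (∀ t : S, B (t : T)),
        ∀ x : ∀ t, B t, f x = g (fun t : R => x t) := by
  -- coordinate maps
  have hC : ∀ s : S, ∃ F : Set T, F.Finite ∧
      ∀ x : ∀ t, B t, (∀ t ∈ F, x t = 0) → f x s = 0 := by
    intro s
    obtain ⟨F, hF, hFv⟩ := clm_factors_finite B ((ContinuousLinearMap.proj s).comp f)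
    exact ⟨F, hF, fun x hx => hFv x hx⟩
  choose F hFfin hFv using hC
  haveI : Countable S := hS.to_subtype
  refine ⟨S ∪ ⋃ s : S, F s, ?_, Set.subset_union_left, ?_⟩
  · exact hS.union (Set.countable_iUnion fun s => (hFfin s).countable)
  set R : Set T := S ∪ ⋃ s : S, F s with hR
  classical
  -- extension map
  let e : (∀ t : R, B (t : T)) →L[ℝ] (∀ t, B t) :=
    ContinuousLinearMap.pi fun t =>
      if h : t ∈ R then ContinuousLinearMap.proj (⟨t, h⟩ : R) else 0
  have he : ∀ (y : ∀ t : R, B (t : T)) (t : T) (h : t ∈ R), e y t = y ⟨t, h⟩ := by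
    intro y t h
    simp [e, ContinuousLinearMap.pi_apply, h]
  refine ⟨f.comp e, fun x => ?_⟩
  funext s
  have hdiff : f (x - e (fun t : R => x (t : T))) s = 0 := by
    apply hFv s
    intro t ht
    have htR : t ∈ R := Set.subset_union_right (Set.mem_iUnion.mpr ⟨s, ht⟩)
    simp [he _ t htR]
  rw [map_sub] at hdiff
  have : f x s - f (e (fun t : R => x (t : T))) s = 0 := hdiff
  have := sub_eq_zero.mp this
  simpa using this
end

section
/- Let T be an index set, (B_t)_{t∈T} Banach spaces, B = Π_{t∈T} B_t, X a subspace of B, and r : B → B a continuous linear map with range contained in X satisfying r(x) = x for all x ∈ X. If (S_j)_{j∈J} is a family of r-admissible subsets of T, then ⋃_{j∈J} S_j is r-admissible. -/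
/-- The restriction map `x ↦ x|_S` from the full product to the subproduct over `S`. -/
def restr {T : Type*} {B : T → Type*} (S : Set T) (x : ∀ t, B t) : ∀ t : S, B (t : T) :=
  fun t => x t

/-- `S ⊆ T` is `r`-admissible (with respect to the subspace `X`) if
`π_S (r z) = π_S z` whenever `π_S z ∈ π_S(X)`. -/
def RAdmissible {T : Type*} {B : T → Type*} (X : Set (∀ t, B t))
    (r : (∀ t, B t) → (∀ t, B t)) (S : Set T) : Prop :=
  ∀ z : ∀ t, B t, restr S z ∈ restr (B := B) S '' X → restr (B := B) S (r z) = restr S z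

theorem union_of_admissible_is_admissible
    {T : Type*} (B : T → Type*)
    [∀ t, NormedAddCommGroup (B t)] [∀ t, NormedSpace ℝ (B t)] [∀ t, CompleteSpace (B t)]
    (X : Submodule ℝ (∀ t, B t)) (r : (∀ t, B t) →L[ℝ] (∀ t, B t))
    (hrange : ∀ z, r z ∈ X) (hfix : ∀ x ∈ X, r x = x)
    {J : Type*} (S : J → Set T) (hS : ∀ j, RAdmissible (X : Set (∀ t, B t)) r (S j)) :
    RAdmissible (X : Set (∀ t, B t)) r (⋃ j, S j) := by
  rintro z ⟨x, hx, hxz⟩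
  funext t
  obtain ⟨j, htj⟩ := Set.mem_iUnion.mp t.2
  have hj : restr (S j) (r z) = restr (S j) z := by
    refine hS j z ⟨x, hx, ?_⟩
    funext s
    exact congrFun hxz ⟨s, Set.mem_iUnion.mpr ⟨j, s.2⟩⟩
  exact congrFun hj ⟨t, htj⟩
end

section
/- Let T be an index set, (B_t)_{t∈T} Banach spaces, B = Π_{t∈T} B_t, X a subspace of B, and r : B → B a continuous linear map with range contained in X and r(x) = x for all x ∈ X. If S ⊆ T is r-admissible, then π_S(X) is a complemented subspace of B_S = Π_{t∈S} B_t; indeed, the map r_S = π_S ∘ r ∘ i_S : B_S → B_S, where i_S is the section of π_S extending by zero, is a continuous linear map with range π_S(X) satisfying r_S(y) = y for all y ∈ π_S(X). -/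
open Classical in
/-- The section `i_S` of `π_S`, extending by zero outside `S`. -/
noncomputable def extendZ {T : Type*} {B : T → Type*} [∀ t, Zero (B t)] (S : Set T)
    (y : ∀ t : S, B (t : T)) : ∀ t, B t :=
  fun t => if h : t ∈ S then y ⟨t, h⟩ else 0

/-- `restr` as a continuous linear map. -/
def restrL {T : Type*} (B : T → Type*)
    [∀ t, NormedAddCommGroup (B t)] [∀ t, NormedSpace ℝ (B t)] (S : Set T) :
    (∀ t, B t) →L[ℝ] (∀ t : S, B (t : T)) :=
  ContinuousLinearMap.pi fun t : S => ContinuousLinearMap.proj (t : T)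

/-- `extendZ` as a continuous linear map. -/
noncomputable def extendZL {T : Type*} (B : T → Type*)
    [∀ t, NormedAddCommGroup (B t)] [∀ t, NormedSpace ℝ (B t)] (S : Set T) :
    (∀ t : S, B (t : T)) →L[ℝ] (∀ t, B t) where
  toFun := extendZ S
  map_add' y z := by
    funext t
    by_cases h : t ∈ S <;> simp [extendZ, h]
  map_smul' c y := by
    funext t
    by_cases h : t ∈ S <;> simp [extendZ, h]
  cont := by
    apply continuous_pi
    intro t
    by_cases h : t ∈ S
    · simpa [extendZ, h] using (continuous_apply (⟨t, h⟩ : S))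
    · simpa [extendZ, h] using continuous_const

lemma restr_extendZ {T : Type*} {B : T → Type*} [∀ t, Zero (B t)] (S : Set T)
    (y : ∀ t : S, B (t : T)) : restr S (extendZ S y) = y := by
  funext t
  simp [restr, extendZ, t.2]

theorem admissible_image_is_complemented
    {T : Type*} (B : T → Type*)
    [∀ t, NormedAddCommGroup (B t)] [∀ t, NormedSpace ℝ (B t)] [∀ t, CompleteSpace (B t)]
    (X : Submodule ℝ (∀ t, B t)) (r : (∀ t, B t) →L[ℝ] (∀ t, B t))
    (hrange : ∀ z, r z ∈ X) (hfix : ∀ x ∈ X, r x = x)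
    (S : Set T) (hS : RAdmissible (X : Set (∀ t, B t)) r S) :
    ∃ p : (∀ t : S, B (t : T)) →L[ℝ] (∀ t : S, B (t : T)),
      (∀ y, p y = restr S (r (extendZ S y))) ∧
      Set.range p = restr (B := B) S '' (X : Set (∀ t, B t)) ∧
      ∀ y ∈ restr (B := B) S '' (X : Set (∀ t, B t)), p y = y := by
  refine ⟨(restrL B S).comp (r.comp (extendZL B S)), fun y => rfl, ?_, ?_⟩
  · have hfixp : ∀ y ∈ restr (B := B) S '' (X : Set (∀ t, B t)),
        restr S (r (extendZ S y)) = y := by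
      rintro y ⟨x, hx, rfl⟩
      have hmem : restr S (extendZ S (restr S x)) ∈ restr (B := B) S '' (X : Set (∀ t, B t)) := by
        rw [restr_extendZ]; exact ⟨x, hx, rfl⟩
      rw [hS _ hmem, restr_extendZ]
    ext y
    constructor
    · rintro ⟨z, rfl⟩
      exact ⟨r (extendZ S z), hrange _, rfl⟩
    · intro hy
      exact ⟨y, hfixp y hy⟩
  · rintro y ⟨x, hx, rfl⟩
    have hmem : restr S (extendZ S (restr S x)) ∈ restr (B := B) S '' (X : Set (∀ t, B t)) := by
      rw [restr_extendZ]; exact ⟨x, hx, rfl⟩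
    show restr S (r (extendZ S (restr S x))) = restr S x
    rw [hS _ hmem, restr_extendZ]
end

section
/- Let T be an uncountable index set, (B_t)_{t∈T} Banach spaces, B = Π_{t∈T} B_t, X a subspace of B, and r : B → B a continuous linear map with range contained in X and r(x) = x for x ∈ X. Then every countable subset A ⊆ T is contained in a countable r-admissible subset S ⊆ T. -/
/-- A continuous linear functional on a product of normed spaces depends on only
finitely many coordinates. -/
lemma aux_exists_finset {T : Type*} {B : T → Type*}
    [∀ t, NormedAddCommGroup (B t)] [∀ t, NormedSpace ℝ (B t)]
    {E : Type*} [NormedAddCommGroup E] [NormedSpace ℝ E]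
    (f : (∀ t, B t) →L[ℝ] E) :
    ∃ I : Finset T, ∀ z : ∀ t, B t, (∀ s ∈ I, z s = 0) → f z = 0 := by
  have h0 : (0 : ∀ t, B t) ∈ f ⁻¹' Metric.ball 0 1 := by
    simp [Metric.mem_ball]
  have hop : IsOpen (f ⁻¹' Metric.ball 0 1) :=
    Metric.isOpen_ball.preimage f.continuous
  obtain ⟨I, u, hu, hsub⟩ := isOpen_pi_iff.mp hop 0 h0
  refine ⟨I, fun z hz => ?_⟩
  by_contra hne
  set c : ℝ := 2 / ‖f z‖ with hc
  have hnorm : ‖f z‖ ≠ 0 := by simpa using hne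
  have hmem : c • z ∈ f ⁻¹' Metric.ball 0 1 := by
    apply hsub
    intro s hs
    have : (c • z) s = 0 := by simp [hz s hs]
    rw [this]
    simpa using (hu s hs).2
  have : ‖f (c • z)‖ < 1 := by simpa [Metric.mem_ball] using hmem
  rw [map_smul, norm_smul] at this
  have hc2 : ‖c‖ * ‖f z‖ = 2 := by
    rw [Real.norm_eq_abs, hc, abs_div, abs_two, abs_of_nonneg (norm_nonneg _),
      div_mul_cancel₀ _ hnorm]
  rw [hc2] at this
  linarith
theorem countable_subset_contained_in_countable_admissible
    {T : Type*} [Uncountable T] (B : T → Type*)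
    [∀ t, NormedAddCommGroup (B t)] [∀ t, NormedSpace ℝ (B t)] [∀ t, CompleteSpace (B t)]
    (X : Submodule ℝ (∀ t, B t)) (r : (∀ t, B t) →L[ℝ] (∀ t, B t))
    (hrange : ∀ z, r z ∈ X) (hfix : ∀ x ∈ X, r x = x)
    (A : Set T) (hA : A.Countable) :
    ∃ S : Set T, S.Countable ∧ A ⊆ S ∧ RAdmissible (X : Set (∀ t, B t)) r S := by
  -- each coordinate of `r` depends on finitely many coordinates
  have key := fun t : T => aux_exists_finset ((ContinuousLinearMap.proj t).comp r)
  choose F hF using key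
  -- iterate closing under `F`
  set g : Set T → Set T := fun s => s ∪ ⋃ t ∈ s, (F t : Set T) with hg
  set Sn : ℕ → Set T := fun n => g^[n] A with hSn
  set S : Set T := ⋃ n, Sn n with hS
  have hgc : ∀ s : Set T, s.Countable → (g s).Countable := by
    intro s hs
    exact hs.union (hs.biUnion fun t _ => (F t).countable_toSet)
  have hSnc : ∀ n, (Sn n).Countable := by
    intro n
    induction n with
    | zero => simpa [hSn] using hA
    | succ n ih =>
      have : Sn (n + 1) = g (Sn n) := by
        simp [hSn, Function.iterate_succ_apply']
      rw [this]; exact hgc _ ih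
  have hSc : S.Countable := Set.countable_iUnion hSnc
  have hAS : A ⊆ S := by
    intro a ha
    exact Set.mem_iUnion.mpr ⟨0, by simpa [hSn] using ha⟩
  have hclosed : ∀ t ∈ S, (F t : Set T) ⊆ S := by
    intro t ht
    obtain ⟨n, hn⟩ := Set.mem_iUnion.mp ht
    intro s hs
    refine Set.mem_iUnion.mpr ⟨n + 1, ?_⟩
    have : Sn (n + 1) = g (Sn n) := by
      simp [hSn, Function.iterate_succ_apply']
    rw [this]
    exact Or.inr (Set.mem_biUnion hn hs)
  refine ⟨S, hSc, hAS, ?_⟩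
  intro z hz
  obtain ⟨x, hxX, hx⟩ := hz
  have hagree : ∀ s ∈ S, z s = x s := by
    intro s hs
    exact (congrFun hx ⟨s, hs⟩).symm
  funext t
  obtain ⟨t, ht⟩ := t
  have h1 : r (z - x) t = 0 := by
    have := hF t (z - x) (fun s hs => by
      have : z s = x s := hagree s (hclosed t ht hs)
      simp [this])
    simpa using this
  have h2 : r z t = r x t := by
    have he : r (z - x) = r z - r x := map_sub r z x
    rw [he] at h1
    exact sub_eq_zero.mp h1
  show r z t = z t
  rw [h2, hfix x hxX]
  exact (hagree t ht).symm
end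

section
/- Every complemented subspace X of a product Π_{t∈T} B_t of Banach spaces over an index set T is topologically isomorphic to a product Π_{j∈J} F_j, where each F_j is a complemented subspace of a countable subproduct Π_{t∈T_j} B_t with T_j ⊆ T countable. -/
/-!
Every coordinate of the continuous projection `r` depends on finitely many coordinates. Well-order
`T` and send `s` to the least `t` from which `s` is reachable along these finite dependence sets:
this level map `ℓ : T → T` has countable fibres, and `r` is block lower triangular for it. The
block-diagonal part `p` of `r` is again idempotent, and `S = p r + (1 - p)(1 - r)` satisfies
`S r = p S`. Since `1 - S` is strictly lower triangular and its coordinates depend on finitely many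
coordinates, it is locally nilpotent, so `S` is invertible by a coordinatewise finite Neumann
series. Thus `S` maps the range of `r` onto the range of `p`, the product of the ranges of the
diagonal blocks, each of which lives on the countable subproduct over a fibre of `ℓ`.
-/

open Filter Topology

theorem DependsOn.inter {ι : Type*} {α : ι → Type*} {β : Type*} {f : (∀ i, α i) → β}
    {s t : Set ι} (hs : DependsOn f s) (ht : DependsOn f t) : DependsOn f (s ∩ t) := by
  classical
  intro x y hxy
  calc f x = f (t.piecewise x y) := ht fun i hi => (Set.piecewise_eq_of_mem _ _ _ hi).symm
    _ = f y := hs fun i hi => by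
      by_cases hit : i ∈ t
      · rw [Set.piecewise_eq_of_mem _ _ _ hit, hxy i ⟨hi, hit⟩]
      · rw [Set.piecewise_eq_of_notMem _ _ _ hit]

theorem ContinuousLinearMap.exists_finset_dependsOn {𝕜 E T : Type*} {B : T → Type*}
    [NontriviallyNormedField 𝕜] [NormedAddCommGroup E] [NormedSpace 𝕜 E]
    [∀ t, AddCommGroup (B t)] [∀ t, Module 𝕜 (B t)] [∀ t, TopologicalSpace (B t)]
    (f : (∀ t, B t) →L[𝕜] E) : ∃ I : Finset T, DependsOn f I := by
  have hball : f ⁻¹' Metric.ball 0 1 ∈ 𝓝 (0 : ∀ t, B t) :=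
    f.continuous.continuousAt.preimage_mem_nhds (by simpa using Metric.ball_mem_nhds 0 one_pos)
  rw [nhds_pi, Filter.mem_pi] at hball
  obtain ⟨I, hI, V, hV, hsub⟩ := hball
  refine ⟨hI.toFinset, fun x y hxy => sub_eq_zero.1 ?_⟩
  rw [← map_sub]
  by_contra hne
  obtain ⟨c, hc⟩ := NormedField.exists_lt_norm 𝕜 ‖f (x - y)‖⁻¹
  have hmem : c • (x - y) ∈ I.pi V := fun t ht => by
    simpa [hxy t (by simpa using ht)] using mem_of_mem_nhds (hV t)
  have hlt : ‖c‖ * ‖f (x - y)‖ < 1 := by simpa [norm_smul] using hsub hmem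
  have hpos : 0 < ‖f (x - y)‖ := norm_pos_iff.2 hne
  have := (inv_lt_iff_one_lt_mul₀ hpos).1 hc
  linarith

section Descendants

variable {T : Type*} (D : T → Finset T)

def descendants (t : T) : Set T :=
  ⋃ n, (fun S => ⋃ u ∈ S, (D u : Set T))^[n] {t}

theorem self_mem_descendants (t : T) : t ∈ descendants D t :=
  Set.mem_iUnion.2 ⟨0, rfl⟩

theorem mem_descendants_of_mem {t u v : T} (hu : u ∈ descendants D t) (hv : v ∈ D u) :
    v ∈ descendants D t := by
  obtain ⟨n, hn⟩ := Set.mem_iUnion.1 hu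
  exact Set.mem_iUnion.2 ⟨n + 1, by
    rw [Function.iterate_succ_apply']
    exact Set.mem_biUnion hn hv⟩

theorem countable_descendants (t : T) : (descendants D t).Countable := by
  refine Set.countable_iUnion fun n => ?_
  induction n with
  | zero => exact Set.countable_singleton t
  | succ n ih =>
    rw [Function.iterate_succ_apply']
    exact ih.biUnion fun u _ => (D u).countable_toSet

theorem exists_countable_fibers_forall_mem_le [LinearOrder T] [WellFoundedLT T] :
    ∃ ℓ : T → T, (∀ j, (ℓ ⁻¹' {j}).Countable) ∧ ∀ s, ∀ u ∈ D s, ℓ u ≤ ℓ s := by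
  let ℓ s := wellFounded_lt.min {t | s ∈ descendants D t} ⟨s, self_mem_descendants D s⟩
  have hmem s : s ∈ descendants D (ℓ s) := wellFounded_lt.min_mem {t | s ∈ descendants D t} _
  have hle {s t} (h : s ∈ descendants D t) : ℓ s ≤ t :=
    wellFounded_lt.min_le (s := {t | s ∈ descendants D t}) h
  refine ⟨ℓ, fun j => (countable_descendants D j).mono ?_,
    fun s u hu => hle (mem_descendants_of_mem D (hmem s) hu)⟩
  rintro s rfl
  exact hmem s

end Descendants

section Triangular

variable {T J : Type*} [LinearOrder J] {B : T → Type*} (ℓ : T → J)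

def IsLowerTriangular (f : (∀ t, B t) → ∀ t, B t) : Prop :=
  ∀ s, DependsOn (fun x => f x s) {u | ℓ u ≤ ℓ s}

def IsStrictlyLowerTriangular (f : (∀ t, B t) → ∀ t, B t) : Prop :=
  ∀ s, DependsOn (fun x => f x s) {u | ℓ u < ℓ s}

variable {ℓ}

theorem IsLowerTriangular.comp_isStrictlyLowerTriangular {f g : (∀ t, B t) → ∀ t, B t}
    (hf : IsLowerTriangular ℓ f) (hg : IsStrictlyLowerTriangular ℓ g) :
    IsStrictlyLowerTriangular ℓ (f ∘ g) :=
  fun _ _ _ h => hf _ fun _ hv => hg _ fun _ hu => h _ (hu.trans_le hv)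

variable {R : Type*} [Semiring R] [∀ t, AddCommMonoid (B t)] [∀ t, Module R (B t)]
  [∀ t, TopologicalSpace (B t)]

theorem IsStrictlyLowerTriangular.eventually_pow_apply_eq_zero [WellFoundedLT J]
    {N : (∀ t, B t) →L[R] ∀ t, B t} (hN : IsStrictlyLowerTriangular ℓ N)
    (hfin : ∀ s, ∃ I : Finset T, DependsOn (fun x => N x s) I) (s : T) :
    ∀ᶠ i in atTop, ∀ x, (N ^ i) x s = 0 := by
  induction s using (InvImage.wf ℓ wellFounded_lt).induction with | _ s ih
  obtain ⟨I, hI⟩ := hfin s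
  obtain ⟨k, hk⟩ := eventually_atTop.1 <| (eventually_all_finset (I.filter (ℓ · < ℓ s))).2
    fun u hu => ih u (Finset.mem_filter.1 hu).2
  refine eventually_atTop.2 ⟨k + 1, fun i hi x => ?_⟩
  obtain ⟨i, rfl⟩ : ∃ i', i = i' + 1 := ⟨i - 1, by omega⟩
  calc (N ^ (i + 1)) x s = N ((N ^ i) x) s := by rw [pow_succ', mul_apply_eq_comp]
    _ = N 0 s := (hI.inter (hN s)) fun u ⟨hu, hlt⟩ =>
      hk i (by omega) u (Finset.mem_filter.2 ⟨hu, hlt⟩) x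
    _ = 0 := by rw [map_zero, Pi.zero_apply]

end Triangular

section Neumann

variable {T R : Type*} {B : T → Type*} [Ring R] [∀ t, AddCommGroup (B t)] [∀ t, Module R (B t)]
  [∀ t, TopologicalSpace (B t)] [∀ t, IsTopologicalAddGroup (B t)]

theorem isUnit_one_sub_of_eventually_pow_apply_eq_zero {N : (∀ t, B t) →L[R] ∀ t, B t}
    (hfin : ∀ s, ∃ I : Finset T, DependsOn (fun x => N x s) I)
    (hnil : ∀ s, ∀ᶠ i in atTop, ∀ x, (N ^ i) x s = 0) : IsUnit (1 - N) := by
  choose k hk using fun s => eventually_atTop.1 (hnil s)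
  let P : ℕ → (∀ t, B t) →L[R] ∀ t, B t := fun n => ∑ i ∈ Finset.range n, N ^ i
  let g : (∀ t, B t) →L[R] ∀ t, B t :=
    ContinuousLinearMap.pi fun s => (ContinuousLinearMap.proj s).comp (P (k s))
  have hg {n s} (hn : k s ≤ n) (x : ∀ t, B t) : g x s = P n x s := by
    simp only [g, P, ContinuousLinearMap.pi_apply, ContinuousLinearMap.comp_apply,
      ContinuousLinearMap.proj_apply, ← Finset.sum_range_add_sum_Ico _ hn, add_apply,
      Pi.add_apply, sum_apply, Finset.sum_apply]
    rw [Finset.sum_eq_zero fun i hi => hk s i (Finset.mem_Ico.1 hi).1 x, add_zero]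
  refine ⟨⟨1 - N, g, ?_, ?_⟩, rfl⟩
  · classical
    ext x s
    obtain ⟨I, hI⟩ := hfin s
    let n := (insert s I).sup k
    have hn {u} (hu : u ∈ insert s I) : k u ≤ n := Finset.le_sup hu
    -- coordinate `s` of `N y` only reads `y` on `I`, where `g x` agrees with `P n x`
    have hNg : N (g x) s = N (P n x) s :=
      hI fun u hu => hg (hn (Finset.mem_insert_of_mem hu)) x
    calc ((1 - N) * g) x s = g x s - N (g x) s := rfl
      _ = ((1 - N) * P n) x s := by rw [hNg, hg (hn (Finset.mem_insert_self s I))]; rfl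
      _ = x s := by
        rw [mul_neg_geom_sum, sub_apply, Pi.sub_apply,
          hk s n (hn (Finset.mem_insert_self s I)) x, sub_zero]
        rfl
  · ext x s
    calc (g * (1 - N)) x s = (P (k s) * (1 - N)) x s := rfl
      _ = x s := by
        rw [geom_sum_mul_neg, sub_apply, Pi.sub_apply, hk s (k s) le_rfl x, sub_zero]
        rfl

end Neumann

section Blocks

variable {R T J : Type*} {B : T → Type*} [Semiring R] [∀ t, AddCommMonoid (B t)]
  [∀ t, Module R (B t)] [∀ t, TopologicalSpace (B t)] (ℓ : T → J)

variable (R) in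
def fiberPiEquiv : (∀ t, B t) ≃L[R] ∀ j, ∀ t : ℓ ⁻¹' {j}, B t where
  toFun x _ t := x t
  invFun y t := y (ℓ t) ⟨t, rfl⟩
  map_add' _ _ := rfl
  map_smul' _ _ := rfl
  left_inv _ := rfl
  right_inv y := by
    ext j ⟨t, rfl⟩
    rfl
  continuous_toFun := continuous_pi fun _ => continuous_pi fun _ => continuous_apply _
  continuous_invFun := continuous_pi fun _ => (continuous_apply _).comp (continuous_apply _)

variable {ℓ}

@[simp]
theorem fiberPiEquiv_symm_apply (y : ∀ j, ∀ t : ℓ ⁻¹' {j}, B t) (t : T) :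
    (fiberPiEquiv R ℓ).symm y t = y (ℓ t) ⟨t, rfl⟩ :=
  rfl

variable [DecidableEq J]

theorem fiberPiEquiv_symm_single_apply_of_ne {j : J} (y : ∀ t : ℓ ⁻¹' {j}, B t) {u : T}
    (h : ℓ u ≠ j) : (fiberPiEquiv R ℓ).symm (Pi.single j y) u = 0 := by
  rw [fiberPiEquiv_symm_apply, Pi.single_eq_of_ne h]
  rfl

theorem fiberPiEquiv_symm_single_fiberPiEquiv_apply_of_eq {j : J} (x : ∀ t, B t) {u : T}
    (h : ℓ u = j) :
    (fiberPiEquiv R ℓ).symm (Pi.single j (fiberPiEquiv R ℓ x j)) u = x u := by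
  subst h
  rw [fiberPiEquiv_symm_apply, Pi.single_eq_same]
  rfl

variable (ℓ)

def diagonalBlock (f : (∀ t, B t) →L[R] ∀ t, B t) (j : J) :
    (∀ t : ℓ ⁻¹' {j}, B t) →L[R] ∀ t : ℓ ⁻¹' {j}, B t :=
  (ContinuousLinearMap.proj j).comp <| (fiberPiEquiv R ℓ).toContinuousLinearMap.comp <|
    f.comp <| (fiberPiEquiv R ℓ).symm.toContinuousLinearMap.comp <|
      ContinuousLinearMap.single R _ j

def blockDiagonalPart (f : (∀ t, B t) →L[R] ∀ t, B t) : (∀ t, B t) →L[R] ∀ t, B t :=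
  (fiberPiEquiv R ℓ).symm.toContinuousLinearMap.comp <|
    (ContinuousLinearMap.pi fun j => (diagonalBlock ℓ f j).comp (ContinuousLinearMap.proj j)).comp
      (fiberPiEquiv R ℓ).toContinuousLinearMap

variable {ℓ}

theorem blockDiagonalPart_apply (f : (∀ t, B t) →L[R] ∀ t, B t) (x : ∀ t, B t) (s : T) :
    blockDiagonalPart ℓ f x s =
      f ((fiberPiEquiv R ℓ).symm (Pi.single (ℓ s) (fiberPiEquiv R ℓ x (ℓ s)))) s :=
  rfl

theorem fiberPiEquiv_blockDiagonalPart (f : (∀ t, B t) →L[R] ∀ t, B t) (x : ∀ t, B t) (j : J) :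
    fiberPiEquiv R ℓ (blockDiagonalPart ℓ f x) j =
      diagonalBlock ℓ f j (fiberPiEquiv R ℓ x j) := by
  simp [blockDiagonalPart]

end Blocks

section BlockTriangular

variable {R T J : Type*} {B : T → Type*} [Ring R] [∀ t, AddCommGroup (B t)]
  [∀ t, Module R (B t)] [∀ t, TopologicalSpace (B t)] [LinearOrder J] {ℓ : T → J}
  {f : (∀ t, B t) →L[R] ∀ t, B t}

theorem dependsOn_blockDiagonalPart_apply (f : (∀ t, B t) →L[R] ∀ t, B t) (s : T) :
    DependsOn (fun x => blockDiagonalPart ℓ f x s) (ℓ ⁻¹' {ℓ s}) := by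
  intro x y h
  simp only [blockDiagonalPart_apply]
  rw [show fiberPiEquiv R ℓ x (ℓ s) = fiberPiEquiv R ℓ y (ℓ s) from funext fun t => h t t.2]

theorem IsLowerTriangular.isIdempotentElem_diagonalBlock (hf : IsLowerTriangular ℓ f)
    (hff : IsIdempotentElem f) (j : J) : IsIdempotentElem (diagonalBlock ℓ f j) := by
  ext y ⟨t, ht⟩
  set z := f ((fiberPiEquiv R ℓ).symm (Pi.single j y))
  have hz : ∀ u, ℓ u < j → z u = 0 := fun u hu => by
    refine (hf u fun v hv => ?_).trans (congrFun (map_zero f) u)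
    exact fiberPiEquiv_symm_single_apply_of_ne y (hv.trans_lt hu).ne
  -- `z` vanishes below level `j` and coordinate `t` of `f` ignores levels above `j`
  calc f ((fiberPiEquiv R ℓ).symm (Pi.single j (fiberPiEquiv R ℓ z j))) t = f z t := by
        refine hf t fun v hv => ?_
        rcases (hv.trans_eq ht).lt_or_eq with h | h
        · rw [fiberPiEquiv_symm_single_apply_of_ne _ h.ne, hz v h]
        · exact fiberPiEquiv_symm_single_fiberPiEquiv_apply_of_eq z h
    _ = z t := by rw [← mul_apply_eq_comp, hff.eq]

theorem IsLowerTriangular.isIdempotentElem_blockDiagonalPart (hf : IsLowerTriangular ℓ f)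
    (hff : IsIdempotentElem f) : IsIdempotentElem (blockDiagonalPart ℓ f) := by
  ext x : 1
  refine (fiberPiEquiv R ℓ).injective (funext fun j => ?_)
  have := congrArg (· (fiberPiEquiv R ℓ x j)) (hf.isIdempotentElem_diagonalBlock hff j).eq
  simpa [mul_apply_eq_comp, fiberPiEquiv_blockDiagonalPart] using this

variable [∀ t, IsTopologicalAddGroup (B t)]

theorem IsLowerTriangular.isStrictlyLowerTriangular_sub_blockDiagonalPart
    (hf : IsLowerTriangular ℓ f) :
    IsStrictlyLowerTriangular ℓ ⇑(f - blockDiagonalPart ℓ f) := by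
  intro s x y h
  let m (x : ∀ t, B t) := (fiberPiEquiv R ℓ).symm (Pi.single (ℓ s) (fiberPiEquiv R ℓ x (ℓ s)))
  have key (x : ∀ t, B t) : (f - blockDiagonalPart ℓ f) x s = f (x - m x) s := by
    rw [sub_apply, map_sub]
    rfl
  simp only [key]
  refine hf s fun u hu => ?_
  rcases hu.lt_or_eq with hlt | heq
  · simp [m, fiberPiEquiv_symm_single_apply_of_ne _ hlt.ne, h u hlt]
  · simp [m, fiberPiEquiv_symm_single_fiberPiEquiv_apply_of_eq _ heq]

theorem isLowerTriangular_one_sub_two_mul_blockDiagonalPart (f : (∀ t, B t) →L[R] ∀ t, B t) :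
    IsLowerTriangular ℓ ⇑(1 - 2 * blockDiagonalPart ℓ f) := by
  intro s x y h
  have hp : blockDiagonalPart ℓ f x s = blockDiagonalPart ℓ f y s :=
    dependsOn_blockDiagonalPart_apply f s fun u hu => h u (le_of_eq hu)
  simp only [sub_apply, one_apply_eq_self, two_mul, add_apply, Pi.sub_apply, Pi.add_apply, hp,
    h s le_rfl]

end BlockTriangular

/-- For `p² = p`, `1 - (1 - 2p)(r - p) = p r + (1 - p)(1 - r)`; this form exhibits it as `1 - N`
with `N` strictly lower triangular when `p` is the block-diagonal part of `r`. -/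
theorem IsIdempotentElem.semiconjBy_one_sub_mul_sub {A : Type*} [Ring A] {p r : A}
    (hp : IsIdempotentElem p) (hr : IsIdempotentElem r) :
    SemiconjBy (1 - (1 - 2 * p) * (r - p)) r p := by
  unfold SemiconjBy
  have e1 : (1 - (1 - 2 * p) * (r - p)) * r =
      r - r * r + p * r + 2 * (p * (r * r)) - 2 * (p * p * r) := by noncomm_ring
  have e2 : p * (1 - (1 - 2 * p) * (r - p)) =
      p - p * r + p * p + 2 * (p * p * r) - 2 * (p * p * p) := by noncomm_ring
  rw [e1, e2, hr.eq, hp.eq, hp.eq]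
  noncomm_ring

def ContinuousLinearEquiv.rangeEquivPiRange {R E ι : Type*} {F : ι → Type*} [Semiring R]
    [AddCommMonoid E] [Module R E] [TopologicalSpace E] [∀ j, AddCommMonoid (F j)]
    [∀ j, Module R (F j)] [∀ j, TopologicalSpace (F j)]
    (Ψ : E ≃L[R] ∀ j, F j) (f : E →ₗ[R] E) (g : ∀ j, F j →ₗ[R] F j)
    (h : ∀ x j, Ψ (f x) j = g j (Ψ x j)) :
    LinearMap.range f ≃L[R] ∀ j, LinearMap.range (g j) where
  toFun x j := ⟨Ψ x j, by
    obtain ⟨z, hz⟩ := x.2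
    exact ⟨Ψ z j, by rw [← h, hz]⟩⟩
  invFun y := ⟨Ψ.symm fun j => y j, by
    choose z hz using fun j => (y j).2
    exact ⟨Ψ.symm z, Ψ.injective <| funext fun j => by simp [h, hz]⟩⟩
  map_add' x y := by ext; simp
  map_smul' c x := by ext; simp
  left_inv x := by ext; simp
  right_inv y := by ext; simp
  continuous_toFun := continuous_pi fun j =>
    ((continuous_apply j).comp (Ψ.continuous.comp continuous_subtype_val)).subtype_mk _
  continuous_invFun := (Ψ.symm.continuous.comp
    (continuous_pi fun j => continuous_subtype_val.comp (continuous_apply j))).subtype_mk _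

theorem IsLowerTriangular.nonempty_range_equiv_pi_range_diagonalBlock {𝕜 T J : Type*}
    {B : T → Type*} [NontriviallyNormedField 𝕜] [∀ t, NormedAddCommGroup (B t)]
    [∀ t, NormedSpace 𝕜 (B t)] [LinearOrder J] [WellFoundedLT J] {ℓ : T → J}
    {r : (∀ t, B t) →L[𝕜] ∀ t, B t} (hlow : IsLowerTriangular ℓ r) (hr : IsIdempotentElem r) :
    Nonempty (LinearMap.range r.toLinearMap ≃L[𝕜]
      ∀ j, LinearMap.range (diagonalBlock ℓ r j).toLinearMap) := by
  have hfin (N : (∀ t, B t) →L[𝕜] ∀ t, B t) (s : T) :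
      ∃ I : Finset T, DependsOn (fun x => N x s) I :=
    ((ContinuousLinearMap.proj s).comp N).exists_finset_dependsOn
  set p := blockDiagonalPart ℓ r
  have hN : IsStrictlyLowerTriangular ℓ ⇑((1 - 2 * p) * (r - p)) :=
    (isLowerTriangular_one_sub_two_mul_blockDiagonalPart r).comp_isStrictlyLowerTriangular
      hlow.isStrictlyLowerTriangular_sub_blockDiagonalPart
  set S := 1 - (1 - 2 * p) * (r - p)
  have hS : IsUnit S := isUnit_one_sub_of_eventually_pow_apply_eq_zero (hfin _)
    (hN.eventually_pow_apply_eq_zero (hfin _))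
  have hSr : S * r = p * S :=
    (hlow.isIdempotentElem_blockDiagonalPart hr).semiconjBy_one_sub_mul_sub hr
  let Ψ := (ContinuousLinearEquiv.unitsEquiv 𝕜 _ hS.unit).trans (fiberPiEquiv 𝕜 ℓ)
  refine ⟨Ψ.rangeEquivPiRange _ (fun j => diagonalBlock ℓ r j) fun x j => ?_⟩
  show fiberPiEquiv 𝕜 ℓ ((S * r) x) j = _
  rw [hSr, mul_apply_eq_comp, fiberPiEquiv_blockDiagonalPart]
  rfl

theorem complemented_subspace_of_product_is_product_of_complemented_subspaces_of_countable_subproducts_general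
    {T : Type u} (B : T → Type u)
    [∀ t, NormedAddCommGroup (B t)] [∀ t, NormedSpace ℝ (B t)]
    (X : Submodule ℝ (∀ t, B t)) (r : (∀ t, B t) →L[ℝ] (∀ t, B t))
    (hrange : Set.range r = (X : Set (∀ t, B t))) (hfix : ∀ x ∈ X, r x = x) :
    ∃ (J : Type u) (Tj : J → Set T)
      (F : ∀ j, Submodule ℝ (∀ t : Tj j, B (t : T))),
      (∀ j, (Tj j).Countable) ∧
      (∀ j, ∃ p : (∀ t : Tj j, B (t : T)) →L[ℝ] (∀ t : Tj j, B (t : T)),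
        Set.range p = (F j : Set (∀ t : Tj j, B (t : T))) ∧ ∀ y ∈ F j, p y = y) ∧
      Nonempty (X ≃L[ℝ] ∀ j, F j) := by
  obtain ⟨_, _⟩ := exists_wellFoundedLT T
  have hX : X = LinearMap.range r.toLinearMap :=
    SetLike.coe_injective (hrange.symm.trans (LinearMap.coe_range _).symm)
  have hr : IsIdempotentElem r :=
    ContinuousLinearMap.ext fun x => hfix _ (hX ▸ LinearMap.mem_range_self _ x)
  choose D hD using fun s => ((ContinuousLinearMap.proj s).comp r).exists_finset_dependsOn
  obtain ⟨ℓ, hfib, hℓ⟩ := exists_countable_fibers_forall_mem_le D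
  have hlow : IsLowerTriangular ℓ r := fun s => (hD s).mono fun u hu => hℓ s u hu
  obtain ⟨e⟩ := hlow.nonempty_range_equiv_pi_range_diagonalBlock hr
  refine ⟨T, fun j => ℓ ⁻¹' {j}, _, hfib,
    fun j => ⟨diagonalBlock ℓ r j, (LinearMap.coe_range _).symm, ?_⟩,
    ⟨(ContinuousLinearEquiv.ofEq _ _ hX).trans e⟩⟩
  rintro _ ⟨y, rfl⟩
  exact congrArg (· y) (hlow.isIdempotentElem_diagonalBlock hr j).eq

theorem complemented_subspace_of_product_is_product_of_complemented_subspaces_of_countable_subproducts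
    {T : Type u} (B : T → Type u)
    [∀ t, NormedAddCommGroup (B t)] [∀ t, NormedSpace ℝ (B t)] [∀ t, CompleteSpace (B t)]
    (X : Submodule ℝ (∀ t, B t)) (r : (∀ t, B t) →L[ℝ] (∀ t, B t))
    (hrange : Set.range r = (X : Set (∀ t, B t))) (hfix : ∀ x ∈ X, r x = x) :
    ∃ (J : Type u) (Tj : J → Set T)
      (F : ∀ j, Submodule ℝ (∀ t : Tj j, B (t : T))),
      (∀ j, (Tj j).Countable) ∧
      (∀ j, ∃ p : (∀ t : Tj j, B (t : T)) →L[ℝ] (∀ t : Tj j, B (t : T)),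
        Set.range p = (F j : Set (∀ t : Tj j, B (t : T))) ∧ ∀ y ∈ F j, p y = y) ∧
      Nonempty (X ≃L[ℝ] ∀ j, F j) :=
  complemented_subspace_of_product_is_product_of_complemented_subspaces_of_countable_subproducts_general
    B X r hrange hfix
end

section
/- For any set J, the Banach space ℓ∞(J) of bounded real-valued functions on J with the supremum norm is an injective object of the category of locally convex topological vector spaces over ℝ: every continuous linear map from a linear subspace A of a locally convex space C into ℓ∞(J) extends to a continuous linear map defined on all of C. -/
open scoped ENNReal

/-- A locally convex space `E` is an injective object of the category of locally convex
spaces if every continuous linear map into `E` from a linear subspace of a locally convex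
space extends to a continuous linear map on the whole space. -/
def IsInjectiveLCS (E : Type*) [AddCommGroup E] [Module ℝ E] [TopologicalSpace E] : Prop :=
  ∀ (C : Type*) [AddCommGroup C] [Module ℝ C] [TopologicalSpace C]
    [IsTopologicalAddGroup C] [ContinuousSMul ℝ C] [LocallyConvexSpace ℝ C]
    (A : Submodule ℝ C) (f : A →L[ℝ] E), ∃ g : C →L[ℝ] E, ∀ a : A, g a = f a

/-!
A continuous linear map `f : A → ℓ∞(J)` is dominated by a single continuous seminorm `p` on the
ambient space: `‖f a‖ ≤ p a`. Every coordinate of `f` then satisfies the same bound, so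
Hahn–Banach extends all coordinates to the whole space under the common bound `p`. The extensions
therefore form a bounded family, i.e. a linear map `g` into `ℓ∞(J)` with `‖g x‖ ≤ p x`, and that
bound makes `g` continuous.
-/

namespace LinearMap

variable {𝕜 E J : Type*} [NormedField 𝕜] [AddCommGroup E] [Module 𝕜 E]
  {F : J → Type*} [∀ j, NormedAddCommGroup (F j)] [∀ j, NormedSpace 𝕜 (F j)]

def toLpInfty (g : ∀ j, E →ₗ[𝕜] F j) {p : Seminorm 𝕜 E} (hg : ∀ j x, ‖g j x‖ ≤ p x) :
    E →ₗ[𝕜] lp F ∞ where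
  toFun x := ⟨fun j => g j x, memℓp_infty ⟨p x, by rintro _ ⟨j, rfl⟩; exact hg j x⟩⟩
  map_add' x y := lp.ext <| funext fun j => map_add (g j) x y
  map_smul' c x := lp.ext <| funext fun j => map_smul (g j) c x

theorem norm_toLpInfty_le (g : ∀ j, E →ₗ[𝕜] F j) {p : Seminorm 𝕜 E} (hg : ∀ j x, ‖g j x‖ ≤ p x)
    (x : E) : ‖toLpInfty g hg x‖ ≤ p x :=
  lp.norm_le_of_forall_le (apply_nonneg p x) (hg · x)

theorem continuous_toLpInfty [TopologicalSpace E] [IsTopologicalAddGroup E]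
    (g : ∀ j, E →ₗ[𝕜] F j) {p : Seminorm 𝕜 E} (hp : Continuous p) (hg : ∀ j x, ‖g j x‖ ≤ p x) :
    Continuous (toLpInfty g hg) :=
  WithSeminorms.continuous_of_continuous_comp (norm_withSeminorms 𝕜 _) _ fun _ =>
    Seminorm.continuous_of_le hp (norm_toLpInfty_le g hg)

end LinearMap

namespace ContinuousLinearMap

variable {𝕜 E : Type*} [NontriviallyNormedField 𝕜] [AddCommGroup E] [Module 𝕜 E]
  [TopologicalSpace E] [PolynormableSpace 𝕜 E]

theorem exists_continuous_seminorm_norm_le {F : Type*} [SeminormedAddCommGroup F]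
    [NormedSpace 𝕜 F] (S : Submodule 𝕜 E) (f : S →L[𝕜] F) :
    ∃ p : Seminorm 𝕜 E, Continuous p ∧ ∀ x : S, ‖f x‖ ≤ p x :=
  (Seminorm.exists_le_comp_of_isInducing (p := (normSeminorm 𝕜 F).comp f.toLinearMap)
    (f := S.subtype) f.continuous.norm Topology.IsInducing.subtypeVal).imp
    fun _ ⟨hp, hfp⟩ => ⟨hp, (hfp ·)⟩

theorem exists_extension_lpInfty [IsRCLikeNormedField 𝕜] {J : Type*} (S : Submodule 𝕜 E)
    (f : S →L[𝕜] lp (fun _ : J => 𝕜) ∞) :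
    ∃ g : E →L[𝕜] lp (fun _ : J => 𝕜) ∞, ∀ x : S, g x = f x := by
  have := (PolynormableSpace.withSeminorms 𝕜 E).topologicalAddGroup
  obtain ⟨p, hp, hfp⟩ := exists_continuous_seminorm_norm_le S f
  have hcoord (j : J) (x : S) : ‖((lp.evalCLM 𝕜 _ ∞ j).comp f) x‖ ≤ p x :=
    (lp.norm_apply_le_norm ENNReal.top_ne_zero (f x) j).trans (hfp x)
  choose g hgf hgp using fun j =>
    Module.Dual.exists_extension_of_le_seminorm S ((lp.evalCLM 𝕜 _ ∞ j).comp f).toLinearMap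
      (hcoord j)
  exact ⟨⟨LinearMap.toLpInfty g hgp, LinearMap.continuous_toLpInfty g hp hgp⟩,
    fun x => lp.ext <| funext fun j => hgf j x⟩

end ContinuousLinearMap

theorem linfty_is_injective (J : Type*) :
    IsInjectiveLCS (lp (fun _ : J => ℝ) ∞) :=
  fun _ _ _ _ _ _ _ A f => ContinuousLinearMap.exists_extension_lpInfty A f
end
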